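/- arXiv:1402.3705 — 4 statements merged into one kernel-verified Lean document; each statement's English description precedes it below -/
import Mathlib

section
/- For every finite abelian group H and integer n ≥ 1, there exists a finite abelian group F such that F/F₍ₙ₎ is isomorphic to H and F is over n, and F is unique up to isomorphism. -/
/-- A finite abelian group `F` is *over `n`* if every nontrivial direct summand
`F₁` of `F` (i.e. `F₁` admitting a complement `F₂` with `F = F₁ ⊕ F₂`)
satisfies `n • F₁ ≠ 0`. -/
def IsOver (F : Type*) [AddCommGroup F] (n : ℕ) : Prop :=
  ∀ F₁ F₂ : AddSubgroup F, IsCompl F₁ F₂ → F₁ ≠ ⊥ → ∃ x ∈ F₁, n • x ≠ (0 : F)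

/-- `F₍ₙ₎ = {x ∈ F : n • x = 0}`, the `n`-torsion subgroup of `F`. -/
def nTors (F : Type*) [AddCommGroup F] (n : ℕ) : AddSubgroup F where
  carrier := {x | n • x = 0}
  zero_mem' := by simp
  add_mem' := by
    intro a b ha hb
    simp only [Set.mem_setOf_eq, smul_add] at *
    rw [ha, hb, add_zero]
  neg_mem' := by
    intro a ha
    simp only [Set.mem_setOf_eq, smul_neg] at *
    rw [ha, neg_zero]


/-!
Write `F ≅ ⊕ᵢ ℤ/pᵢ^{aᵢ}` with `aᵢ ≥ 1`. A summand `ℤ/p^a` is killed by `n` exactly when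
`a ≤ v_p(n)`, and `F` is over `n` iff `aᵢ > v_{pᵢ}(n)` for all `i`; then
`F/F₍ₙ₎ ≅ ⊕ᵢ ℤ/pᵢ^{aᵢ - v_{pᵢ}(n)}` with all exponents positive. So for existence decompose
`H = ⊕ᵢ ℤ/pᵢ^{sᵢ}` and take `aᵢ = sᵢ + v_{pᵢ}(n)`. For uniqueness, the prime-power decomposition
of `H` is unique: for each prime `P` the orders `|H[P^m]| = P^{∑_{pᵢ = P} min(sᵢ, m)}` determine
how many `sᵢ` with `pᵢ = P` equal each `k`. Hence `H` determines the pairs `(pᵢ, aᵢ)` of `F`.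
-/

open Finset

section NTors

variable {F G : Type*} [AddCommGroup F] [AddCommGroup G]

@[simp]
theorem mem_nTors {n : ℕ} {x : F} : x ∈ nTors F n ↔ n • x = 0 := Iff.rfl

theorem AddEquiv.map_nTors (e : F ≃+ G) (n : ℕ) :
    (nTors F n).map e.toAddMonoidHom = nTors G n := by
  ext y
  refine ⟨?_, fun hy => ⟨e.symm y, ?_, e.apply_symm_apply y⟩⟩
  · rintro ⟨x, hx, rfl⟩
    simp_all [← map_nsmul]
  · simpa [← map_nsmul] using hy

def AddEquiv.quotientNTorsCongr (e : F ≃+ G) (n : ℕ) : (F ⧸ nTors F n) ≃+ (G ⧸ nTors G n) :=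
  QuotientAddGroup.congr _ _ e (e.map_nTors n)

theorem AddEquiv.card_nTors (e : F ≃+ G) (n : ℕ) :
    Nat.card (nTors F n) = Nat.card (nTors G n) := by
  rw [← e.map_nTors n]
  exact (AddSubgroup.card_map_of_injective e.injective).symm

end NTors

section Pi

variable {ι : Type*} (G : ι → Type*) [∀ i, AddCommGroup (G i)]

noncomputable def quotientNTorsPiEquiv (n : ℕ) :
    (∀ i, G i) ⧸ nTors (∀ i, G i) n ≃+ ∀ i, G i ⧸ nTors (G i) n :=
  let φ : (∀ i, G i) →+ ∀ i, G i ⧸ nTors (G i) n :=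
    AddMonoidHom.pi fun i => (QuotientAddGroup.mk' _).comp (Pi.evalAddMonoidHom G i)
  have hker : φ.ker = nTors (∀ i, G i) n := by
    ext x
    simp [φ, funext_iff, QuotientAddGroup.eq_zero_iff]
  (QuotientAddGroup.quotientAddEquivOfEq hker.symm).trans
    (QuotientAddGroup.quotientKerEquivOfSurjective φ
      (Function.Surjective.piMap fun i => QuotientAddGroup.mk'_surjective _))

theorem card_nTors_pi [Fintype ι] (n : ℕ) :
    Nat.card (nTors (∀ i, G i) n) = ∏ i, Nat.card (nTors (G i) n) := by
  rw [← Nat.card_pi]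
  exact Nat.card_congr ((Equiv.subtypeEquivRight fun x => by simp [funext_iff]).trans
    (Equiv.subtypePiEquivPi (p := fun i y => y ∈ nTors (G i) n)))

end Pi

theorem Nat.dvd_mul_iff_div_gcd_dvd {q n v : ℕ} (hq : 0 < q) :
    q ∣ n * v ↔ q / q.gcd n ∣ v := by
  obtain ⟨g, q', n', hg, hco, rfl, rfl⟩ := Nat.exists_coprime' (Nat.gcd_pos_of_pos_left n hq)
  rw [Nat.gcd_mul_right, hco.gcd_eq_one, one_mul, Nat.mul_div_cancel _ hg, mul_assoc,
    mul_comm g, ← mul_assoc, Nat.mul_dvd_mul_iff_right hg]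
  exact hco.dvd_mul_left

theorem Nat.Prime.gcd_pow_eq {p : ℕ} (hp : p.Prime) (a : ℕ) {n : ℕ} (hn : n ≠ 0) :
    Nat.gcd (p ^ a) n = p ^ min a (n.factorization p) := by
  obtain ⟨c, hca, hc⟩ := (Nat.dvd_prime_pow hp).1 (Nat.gcd_dvd_left (p ^ a) n)
  have hcn : c ≤ n.factorization p :=
    (hp.pow_dvd_iff_le_factorization hn).1 (hc ▸ Nat.gcd_dvd_right _ _)
  have hmin : p ^ min a (n.factorization p) ∣ p ^ c := hc ▸ Nat.dvd_gcd
    (pow_dvd_pow p (min_le_left _ _))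
    ((pow_dvd_pow p (min_le_right _ _)).trans (Nat.ordProj_dvd n p))
  rw [Nat.pow_dvd_pow_iff_le_right hp.one_lt] at hmin
  rw [hc]
  congr 1
  omega

theorem eq_zero_of_nsmul_eq_zero_of_coprime {M : Type*} [AddMonoid M] {x : M} {a b : ℕ}
    (hab : a.Coprime b) (ha : a • x = 0) (hb : b • x = 0) : x = 0 :=
  AddMonoid.addOrderOf_eq_one_iff.1 <| Nat.eq_one_of_dvd_coprimes hab
    (addOrderOf_dvd_iff_nsmul_eq_zero.2 ha) (addOrderOf_dvd_iff_nsmul_eq_zero.2 hb)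

namespace ZMod

variable {q : ℕ} [NeZero q]

theorem nsmul_eq_zero_iff_div_gcd_dvd_val (n : ℕ) (x : ZMod q) :
    n • x = 0 ↔ q / q.gcd n ∣ x.val := by
  rw [← Nat.dvd_mul_iff_div_gcd_dvd (NeZero.pos q), ← ZMod.natCast_eq_zero_iff, Nat.cast_mul,
    ZMod.natCast_zmod_val, nsmul_eq_mul]

noncomputable def quotientNTorsEquiv (q n : ℕ) [NeZero q] :
    ZMod q ⧸ nTors (ZMod q) n ≃+ ZMod (q / q.gcd n) :=
  let φ := (ZMod.castHom (Nat.div_dvd_of_dvd (Nat.gcd_dvd_left q n)) (ZMod (q / q.gcd n)))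
  have hker : φ.toAddMonoidHom.ker = nTors (ZMod q) n := by
    ext x
    rw [AddMonoidHom.mem_ker, mem_nTors, nsmul_eq_zero_iff_div_gcd_dvd_val,
      ← ZMod.natCast_eq_zero_iff, ← ZMod.cast_eq_val]
    rfl
  (QuotientAddGroup.quotientAddEquivOfEq hker.symm).trans
    (QuotientAddGroup.quotientKerEquivOfSurjective _ (ZMod.ringHom_surjective φ))

theorem card_nTors (n : ℕ) : Nat.card (nTors (ZMod q) n) = q.gcd n := by
  have hq := NeZero.pos q
  have h := AddSubgroup.card_eq_card_quotient_mul_card_addSubgroup (nTors (ZMod q) n)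
  rw [Nat.card_congr (quotientNTorsEquiv q n).toEquiv, Nat.card_zmod, Nat.card_zmod] at h
  refine Nat.eq_of_mul_eq_mul_left
    (Nat.div_pos (Nat.gcd_le_left n hq) (Nat.gcd_pos_of_pos_left n hq)) ?_
  rw [← h, Nat.div_mul_cancel (Nat.gcd_dvd_left q n)]

theorem exists_pow_nsmul_eq_of_nsmul_eq_zero {p a v : ℕ} (hp : p.Prime) (hv : v < a)
    {x : ZMod (p ^ a)} (hx : p • x = 0) : ∃ y, p ^ v • y = x := by
  have : NeZero (p ^ a) := ⟨pow_ne_zero a hp.ne_zero⟩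
  rw [nsmul_eq_zero_iff_div_gcd_dvd_val, hp.gcd_pow_eq a hp.ne_zero, hp.factorization_self,
    min_eq_right (by omega), Nat.pow_div (by omega) hp.pos] at hx
  obtain ⟨c, hc⟩ := hx
  refine ⟨((p ^ (a - 1 - v) * c : ℕ) : ZMod (p ^ a)), ?_⟩
  rw [nsmul_eq_mul, ← Nat.cast_mul, ← mul_assoc, ← pow_add, Nat.add_sub_of_le (by omega), ← hc,
    ZMod.natCast_zmod_val]

theorem eq_zero_of_nsmul_eq_zero_of_coprime {q m : ℕ} (hqm : q.Coprime m) {x : ZMod q}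
    (hx : m • x = 0) : x = 0 :=
  _root_.eq_zero_of_nsmul_eq_zero_of_coprime hqm
    (by rw [nsmul_eq_mul, ZMod.natCast_self, zero_mul]) hx

end ZMod

section IsOver

variable {F G : Type*} [AddCommGroup F] [AddCommGroup G] {n : ℕ}

theorem IsOver.of_addEquiv (hF : IsOver F n) (e : F ≃+ G) : IsOver G n := by
  intro G₁ G₂ hc hne
  let f := e.symm.mapAddSubgroup
  obtain ⟨_, ⟨y, hy, rfl⟩, hny⟩ := hF (f G₁) (f G₂) (f.isCompl hc) (by simpa using hne)
  exact ⟨y, hy, fun h => hny (by simp [← map_nsmul, h])⟩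

theorem AddSubgroup.exists_prime_dvd_nsmul_eq_zero {K : AddSubgroup F} (hK : K ≠ ⊥)
    (hn : n ≠ 0) (hKn : ∀ x ∈ K, n • x = 0) :
    ∃ p, p.Prime ∧ p ∣ n ∧ ∃ x ∈ K, x ≠ 0 ∧ p • x = 0 := by
  obtain ⟨z, hzK, hz0⟩ := K.bot_or_exists_ne_zero.resolve_left hK
  have hon : addOrderOf z ∣ n := addOrderOf_dvd_iff_nsmul_eq_zero.2 (hKn z hzK)
  have ho : 0 < addOrderOf z := Nat.pos_of_dvd_of_pos hon (Nat.pos_of_ne_zero hn)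
  obtain ⟨p, hp, hpo⟩ := Nat.exists_prime_and_dvd (mt AddMonoid.addOrderOf_eq_one_iff.1 hz0)
  refine ⟨p, hp, hpo.trans hon, (addOrderOf z / p) • z, K.nsmul_mem hzK _, ?_, ?_⟩
  · exact nsmul_ne_zero_of_lt_addOrderOf
      ((Nat.div_ne_zero_iff_of_dvd hpo).2 ⟨ho.ne', hp.ne_zero⟩) (Nat.div_lt_self ho hp.one_lt)
  · rw [smul_smul, Nat.mul_div_cancel' hpo, addOrderOf_nsmul_eq_zero]

/-- A summand killed by `n` would contain some `x ≠ 0` with `p • x = 0` for a prime `p ∣ n`;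
writing `x = p ^ v • y` (`v = v_p(n)`) and projecting `y` to the summand shows that `x` is also
killed by `n / p ^ v`, which is prime to `p`. -/
theorem isOver_of_forall_prime (hn : n ≠ 0) (h : ∀ p, p.Prime → p ∣ n → ∀ x : F, p • x = 0 →
    ∃ y, p ^ n.factorization p • y = x) : IsOver F n := by
  intro F₁ F₂ hc hne
  by_contra! hkill
  obtain ⟨p, hp, hpn, x, hxF, hx0, hpx⟩ :=
    AddSubgroup.exists_prime_dvd_nsmul_eq_zero hne hn hkill
  obtain ⟨y, rfl⟩ := h p hp hpn x hpx
  obtain ⟨y₁, hy₁, y₂, hy₂, rfl⟩ :=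
    AddSubgroup.mem_sup.1 (hc.sup_eq_top ▸ AddSubgroup.mem_top y)
  have hy₂ : p ^ n.factorization p • y₂ = 0 := by
    refine (AddSubgroup.disjoint_def.1 hc.disjoint) ?_ (F₂.nsmul_mem hy₂ _)
    simpa [smul_add] using F₁.sub_mem hxF (F₁.nsmul_mem hy₁ (p ^ n.factorization p))
  rw [smul_add, hy₂, add_zero] at hx0 hpx
  refine hx0 (eq_zero_of_nsmul_eq_zero_of_coprime (Nat.coprime_ordCompl hp hn) hpx ?_)
  rw [smul_smul, Nat.div_mul_cancel (Nat.ordProj_dvd n p), hkill y₁ hy₁]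

theorem AddSubgroup.isCompl_range_single_ker_eval {ι : Type*} [DecidableEq ι] (G : ι → Type*)
    [∀ i, AddCommGroup (G i)] (i : ι) :
    IsCompl (AddMonoidHom.single G i).range (Pi.evalAddMonoidHom G i).ker := by
  constructor
  · rw [AddSubgroup.disjoint_def]
    rintro _ ⟨y, rfl⟩ hy
    simp_all
  · rw [codisjoint_iff, AddSubgroup.eq_top_iff']
    intro x
    exact AddSubgroup.mem_sup.2
      ⟨Pi.single i (x i), ⟨x i, rfl⟩, x - Pi.single i (x i), by simp, add_sub_cancel _ _⟩

theorem IsOver.exists_nsmul_ne_zero {ι : Type*} {G : ι → Type*} [∀ i, AddCommGroup (G i)]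
    (h : IsOver (∀ i, G i) n) (i : ι) [Nontrivial (G i)] : ∃ y : G i, n • y ≠ 0 := by
  classical
  obtain ⟨y, hy⟩ := exists_ne (0 : G i)
  obtain ⟨_, ⟨z, rfl⟩, hz⟩ := h _ _ (AddSubgroup.isCompl_range_single_ker_eval G i) <|
    AddSubgroup.ne_bot_iff_exists_ne_zero.2 ⟨⟨_, y, rfl⟩, by simpa [Subtype.ext_iff] using hy⟩
  exact ⟨z, fun h0 => hz (by rw [← map_nsmul, h0, map_zero])⟩

end IsOver

section PiZMod

variable {ι : Type*} {p : ι → ℕ}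

theorem exists_pow_nsmul_eq_pi_zmod (hp : ∀ i, (p i).Prime) {a : ι → ℕ} {d v : ℕ}
    (hd : d.Prime) (hv : ∀ i, p i = d → v < a i) {x : ∀ i, ZMod (p i ^ a i)} (hx : d • x = 0) :
    ∃ y, d ^ v • y = x := by
  have h : ∀ i, ∃ y, d ^ v • y = x i := by
    intro i
    by_cases hpd : p i = d
    · subst hpd
      exact ZMod.exists_pow_nsmul_eq_of_nsmul_eq_zero hd (hv i rfl) (congr_fun hx i)
    · have hco : (p i ^ a i).Coprime d :=
        Nat.Coprime.pow_left _ ((Nat.coprime_primes (hp i) hd).2 hpd)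
      exact ⟨0, (ZMod.eq_zero_of_nsmul_eq_zero_of_coprime hco (congr_fun hx i)).symm ▸ smul_zero _⟩
  choose y hy using h
  exact ⟨y, funext hy⟩

theorem isOver_pi_zmod_prime_pow_iff (hp : ∀ i, (p i).Prime) {a : ι → ℕ}
    (ha : ∀ i, a i ≠ 0) {n : ℕ} (hn : n ≠ 0) :
    IsOver (∀ i, ZMod (p i ^ a i)) n ↔ ∀ i, n.factorization (p i) < a i := by
  refine ⟨fun h i => ?_, fun h => isOver_of_forall_prime hn fun d hd _ x hx =>
    exists_pow_nsmul_eq_pi_zmod hp hd (fun i hi => hi ▸ h i) hx⟩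
  have : Nontrivial (ZMod (p i ^ a i)) :=
    ZMod.nontrivial_iff.2 (Nat.one_lt_pow (ha i) (hp i).one_lt).ne'
  obtain ⟨y, hy⟩ := h.exists_nsmul_ne_zero i
  by_contra! hle
  have hdvd : p i ^ a i ∣ n := ((hp i).pow_dvd_iff_le_factorization hn).2 hle
  exact hy (by rw [nsmul_eq_mul, (ZMod.natCast_eq_zero_iff _ _).2 hdvd, zero_mul])

theorem card_nTors_pi_zmod_prime_pow [Fintype ι] (hp : ∀ i, (p i).Prime) (s : ι → ℕ) {P : ℕ}
    (hP : P.Prime) (m : ℕ) :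
    Nat.card (nTors (∀ i, ZMod (p i ^ s i)) (P ^ m)) = P ^ ∑ i with p i = P, min (s i) m := by
  rw [card_nTors_pi, sum_filter, ← prod_pow_eq_pow_sum]
  refine prod_congr rfl fun i _ => ?_
  have : NeZero (p i ^ s i) := ⟨pow_ne_zero _ (hp i).ne_zero⟩
  rw [ZMod.card_nTors, (hp i).gcd_pow_eq _ (pow_ne_zero m hP.ne_zero), hP.factorization_pow,
    Finsupp.single_apply]
  by_cases h : p i = P
  · simp [h]
  · simp [h, Ne.symm h]

noncomputable def quotientNTorsPiZModPrimePowEquiv (hp : ∀ i, (p i).Prime) {a : ι → ℕ} {n : ℕ}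
    (hn : n ≠ 0) : (∀ i, ZMod (p i ^ a i)) ⧸ nTors (∀ i, ZMod (p i ^ a i)) n ≃+
      ∀ i, ZMod (p i ^ (a i - n.factorization (p i))) :=
  have : ∀ i, NeZero (p i ^ a i) := fun i => ⟨pow_ne_zero _ (hp i).ne_zero⟩
  (quotientNTorsPiEquiv _ n).trans <| AddEquiv.piCongrRight fun i =>
    (ZMod.quotientNTorsEquiv _ n).trans <| (ZMod.ringEquivCongr <| by
      rw [(hp i).gcd_pow_eq _ hn, Nat.pow_div (min_le_left _ _) (hp i).pos]
      congr 1
      omega).toAddEquiv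

end PiZMod

namespace Finset

variable {α β : Type*}

theorem sum_min_add_one (u : Finset α) (f : α → ℕ) (m : ℕ) :
    ∑ a ∈ u, min (f a) (m + 1) = ∑ a ∈ u, min (f a) m + #{a ∈ u | m + 1 ≤ f a} := by
  rw [card_filter, ← sum_add_distrib]
  refine sum_congr rfl fun a _ => ?_
  split_ifs <;> omega

theorem card_filter_le_eq_add (u : Finset α) (f : α → ℕ) (k : ℕ) :
    #{a ∈ u | k ≤ f a} = #{a ∈ u | f a = k} + #{a ∈ u | k + 1 ≤ f a} := by
  rw [card_filter, card_filter, card_filter, ← sum_add_distrib]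
  refine sum_congr rfl fun a _ => ?_
  split_ifs <;> omega

/-- The function `m ↦ ∑ min (f a) m` has increments `#{a | m + 1 ≤ f a}`, whose increments in turn
count the `a` with `f a = k`. -/
theorem card_filter_eq_of_sum_min_eq {s : Finset α} {t : Finset β} {f : α → ℕ} {g : β → ℕ}
    (hf : ∀ a ∈ s, f a ≠ 0) (hg : ∀ b ∈ t, g b ≠ 0)
    (h : ∀ m, ∑ a ∈ s, min (f a) m = ∑ b ∈ t, min (g b) m) (k : ℕ) :
    #{a ∈ s | f a = k} = #{b ∈ t | g b = k} := by
  have hle : ∀ m, #{a ∈ s | m + 1 ≤ f a} = #{b ∈ t | m + 1 ≤ g b} := fun m => by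
    have := h (m + 1)
    rw [sum_min_add_one, sum_min_add_one, h m] at this
    omega
  cases k with
  | zero =>
    rw [filter_false_of_mem fun a ha => hf a ha, filter_false_of_mem fun b hb => hg b hb,
      card_empty, card_empty]
  | succ k =>
    have := card_filter_le_eq_add s f (k + 1)
    have := card_filter_le_eq_add t g (k + 1)
    have := hle k
    have := hle (k + 1)
    omega

end Finset

theorem AddCommGroup.exists_addEquiv_pi_zmod_prime_pow (G : Type*) [AddCommGroup G] [Finite G] :
    ∃ (ι : Type) (_ : Fintype ι) (p e : ι → ℕ), (∀ i, (p i).Prime) ∧ (∀ i, e i ≠ 0) ∧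
      Nonempty (G ≃+ ∀ i, ZMod (p i ^ e i)) := by
  classical
  obtain ⟨ι, _, p, hp, e, ⟨f⟩⟩ := AddCommGroup.equiv_directSum_zmod_of_finite G
  have : ∀ i : {i // ¬e i ≠ 0}, Subsingleton (ZMod (p i ^ e i)) := fun i =>
    ZMod.subsingleton_iff.2 (by rw [not_not.1 i.2, pow_zero])
  exact ⟨{i // e i ≠ 0}, inferInstance, fun i => p i, fun i => e i, fun i => hp i, fun i => i.2,
    ⟨f.trans <| (DirectSum.addEquivProd _).trans <| ((RingEquiv.piEquivPiSubtypeProd _ _).trans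
      (RingEquiv.prodZeroRing _ _).symm).toAddEquiv⟩⟩

theorem exists_equiv_of_addEquiv_pi_zmod_prime_pow {ι κ : Type*} [Fintype ι] [Fintype κ]
    {p s : ι → ℕ} {q t : κ → ℕ} (hp : ∀ i, (p i).Prime) (hq : ∀ j, (q j).Prime)
    (hs : ∀ i, s i ≠ 0) (ht : ∀ j, t j ≠ 0)
    (e : (∀ i, ZMod (p i ^ s i)) ≃+ ∀ j, ZMod (q j ^ t j)) :
    ∃ σ : ι ≃ κ, ∀ i, q (σ i) = p i ∧ t (σ i) = s i := by
  have hsum : ∀ P m, ∑ i with p i = P, min (s i) m = ∑ j with q j = P, min (t j) m := by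
    intro P m
    by_cases hP : P.Prime
    · apply Nat.pow_right_injective hP.two_le
      simp only
      rw [← card_nTors_pi_zmod_prime_pow hp s hP, ← card_nTors_pi_zmod_prime_pow hq t hP,
        e.card_nTors]
    · rw [filter_false_of_mem fun i _ (hi : p i = P) => hP (hi ▸ hp i),
        filter_false_of_mem fun j _ (hj : q j = P) => hP (hj ▸ hq j), sum_empty, sum_empty]
  have hfib : ∀ v : ℕ × ℕ,
      Fintype.card {i // (p i, s i) = v} = Fintype.card {j // (q j, t j) = v} := by
    rintro ⟨P, k⟩
    simp only [Fintype.card_subtype, Prod.mk.injEq, ← filter_filter]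
    exact card_filter_eq_of_sum_min_eq (fun i _ => hs i) (fun j _ => ht j) (hsum P) k
  exact ⟨Equiv.ofFiberEquiv fun v => Fintype.equivOfCardEq (hfib v), fun i =>
    Prod.ext_iff.1 (Equiv.ofFiberEquiv_map (g := fun j => (q j, t j)) _ i)⟩

theorem IsOver.exists_addEquiv_pi_zmod {F : Type*} [AddCommGroup F] [Finite F] {n : ℕ}
    (hn : n ≠ 0) (hF : IsOver F n) :
    ∃ (ι : Type) (_ : Fintype ι) (p a : ι → ℕ), (∀ i, (p i).Prime) ∧
      (∀ i, n.factorization (p i) < a i) ∧ Nonempty (F ≃+ ∀ i, ZMod (p i ^ a i)) := by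
  obtain ⟨ι, _, p, a, hp, ha, ⟨e⟩⟩ := AddCommGroup.exists_addEquiv_pi_zmod_prime_pow F
  exact ⟨ι, inferInstance, p, a, hp,
    (isOver_pi_zmod_prime_pow_iff hp ha hn).1 (hF.of_addEquiv e), ⟨e⟩⟩

def AddEquiv.piZModCongr {ι κ : Type*} {M : ι → ℕ} {N : κ → ℕ} (σ : ι ≃ κ)
    (h : ∀ i, N (σ i) = M i) : (∀ i, ZMod (M i)) ≃+ ∀ j, ZMod (N j) :=
  (AddEquiv.piCongrRight fun i => (ZMod.ringEquivCongr (h i).symm).toAddEquiv).trans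
    (RingEquiv.piCongrLeft (fun j => ZMod (N j)) σ).toAddEquiv

theorem IsOver.nonempty_addEquiv {F F' : Type*} [AddCommGroup F] [AddCommGroup F'] [Finite F]
    [Finite F'] {n : ℕ} (hn : n ≠ 0) (hF : IsOver F n) (hF' : IsOver F' n)
    (e : (F ⧸ nTors F n) ≃+ (F' ⧸ nTors F' n)) : Nonempty (F ≃+ F') := by
  obtain ⟨ι, _, p, a, hp, ha, ⟨eF⟩⟩ := hF.exists_addEquiv_pi_zmod hn
  obtain ⟨κ, _, q, b, hq, hb, ⟨eF'⟩⟩ := hF'.exists_addEquiv_pi_zmod hn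
  have E := (quotientNTorsPiZModPrimePowEquiv hp hn).symm.trans <|
    (eF.quotientNTorsCongr n).symm.trans <| e.trans <|
    (eF'.quotientNTorsCongr n).trans (quotientNTorsPiZModPrimePowEquiv hq hn)
  obtain ⟨σ, hσ⟩ := exists_equiv_of_addEquiv_pi_zmod_prime_pow hp hq
    (fun i => Nat.sub_ne_zero_of_lt (ha i)) (fun j => Nat.sub_ne_zero_of_lt (hb j)) E
  refine ⟨eF.trans <| (AddEquiv.piZModCongr σ fun i => ?_).trans eF'.symm⟩
  obtain ⟨hqp, hba⟩ := hσ i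
  have := ha i
  have := hb (σ i)
  rw [hqp] at hba this ⊢
  congr 1
  omega

theorem exists_isOver_quotient_addEquiv (H : Type) [AddCommGroup H] [Finite H] {n : ℕ}
    (hn : n ≠ 0) :
    ∃ (F : Type) (_ : AddCommGroup F), Finite F ∧ IsOver F n ∧ Nonempty ((F ⧸ nTors F n) ≃+ H) := by
  obtain ⟨ι, _, p, s, hp, hs, ⟨e⟩⟩ := AddCommGroup.exists_addEquiv_pi_zmod_prime_pow H
  have : ∀ i, NeZero (p i ^ (s i + n.factorization (p i))) :=
    fun i => ⟨pow_ne_zero _ (hp i).ne_zero⟩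
  refine ⟨∀ i, ZMod (p i ^ (s i + n.factorization (p i))), inferInstance, inferInstance,
    (isOver_pi_zmod_prime_pow_iff hp (fun i => by grind) hn).2 fun i => by grind, ⟨?_⟩⟩
  exact (quotientNTorsPiZModPrimePowEquiv hp hn).trans <| (AddEquiv.piCongrRight fun i =>
    (ZMod.ringEquivCongr (by rw [Nat.add_sub_cancel])).toAddEquiv).trans e.symm

/-- For every finite abelian group `H` and `n ≥ 1` there exists
a finite abelian group `F` with `F / F₍ₙ₎ ≅ H` and `F` over `n`, and such an
`F` is unique up to isomorphism. -/
theorem exists_unique_over_group (H : Type) [AddCommGroup H] [Finite H]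
    (n : ℕ) (hn : 1 ≤ n) :
    (∃ (F : Type) (iF : AddCommGroup F), Finite F ∧ @IsOver F iF n ∧
       Nonempty (@AddEquiv (@HasQuotient.Quotient F (AddSubgroup F)
         (@QuotientAddGroup.instHasQuotientAddSubgroup F
           (@AddCommGroup.toAddGroup F iF)) (@nTors F iF n)) H _ _)) ∧
    (∀ (F F' : Type) [AddCommGroup F] [AddCommGroup F'], Finite F → Finite F' →
       IsOver F n → IsOver F' n →
       Nonempty ((F ⧸ nTors F n) ≃+ H) → Nonempty ((F' ⧸ nTors F' n) ≃+ H) →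
       Nonempty (F ≃+ F')) := by
  have hn₀ : n ≠ 0 := Nat.one_le_iff_ne_zero.1 hn
  exact ⟨exists_isOver_quotient_addEquiv H hn₀, fun F F' _ _ _ _ hF hF' ⟨e⟩ ⟨e'⟩ =>
    hF.nonempty_addEquiv hn₀ hF' (e.trans e'.symm)⟩
end

section
/- The characteristic subgroups of the free abelian group A = ⊕_ℕ ℤ of countably infinite rank are exactly the subgroups r·A for r = 0, 1, 2, …. -/
/-!
A characteristic subgroup `K` of `ι →₀ R` (with `ι` having two distinct indices) is
coordinatewise: the transvection `x ↦ x + x i • eⱼ` is an automorphism, so subtracting `x`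
shows `x i • eⱼ ∈ K` for every `x ∈ K` and `i ≠ j`; a detour through some `k ≠ i` also
handles `i = j`. Hence `x ∈ K` iff every coordinate of `x` lies in the subgroup
`{c | c • e₀ ∈ K}` of `R`. For `R = ℤ` that subgroup is `rℤ`, so `K = r • (ι →₀ ℤ)`.
-/

/-- A subgroup `K` of an abelian group is *characteristic* if `φ(K) = K` for
every automorphism `φ`. -/
def IsCharSubgroup {G : Type*} [AddCommGroup G] (K : AddSubgroup G) : Prop :=
  ∀ φ : G ≃+ G, K.map φ.toAddMonoidHom = K

theorem IsCharSubgroup.map_mem {G : Type*} [AddCommGroup G] {K : AddSubgroup G}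
    (hK : IsCharSubgroup K) (φ : G ≃+ G) {x : G} (hx : x ∈ K) : φ x ∈ K :=
  hK φ ▸ AddSubgroup.mem_map_of_mem _ hx

theorem isCharSubgroup_range_smulAddHom {G : Type*} [AddCommGroup G] (r : ℕ) :
    IsCharSubgroup (smulAddHom ℕ G r).range := by
  intro φ
  ext x
  simp only [AddSubgroup.mem_map, AddMonoidHom.mem_range, smulAddHom_apply]
  constructor
  · rintro ⟨_, ⟨y, rfl⟩, rfl⟩
    exact ⟨φ y, (map_nsmul φ r y).symm⟩
  · rintro ⟨y, rfl⟩
    exact ⟨r • φ.symm y, ⟨φ.symm y, rfl⟩, by simp⟩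

namespace Finsupp

variable {ι R : Type*} [Ring R]

theorem mem_range_smulAddHom_iff (x : ι →₀ ℤ) (r : ℕ) :
    x ∈ (smulAddHom ℕ (ι →₀ ℤ) r).range ↔ ∀ i, (r : ℤ) ∣ x i := by
  constructor
  · rintro ⟨y, rfl⟩ i
    simp
  · intro hx
    refine ⟨x.mapRange (· / (r : ℤ)) (Int.zero_ediv _), ext fun i => ?_⟩
    simpa using Int.mul_ediv_cancel' (hx i)

variable {K : AddSubgroup (ι →₀ R)}

theorem _root_.IsCharSubgroup.single_apply_mem_of_ne (hK : IsCharSubgroup K) {x : ι →₀ R}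
    (hx : x ∈ K) {i j : ι} (hij : i ≠ j) : single j (x i) ∈ K := by
  have hτ : lapply (R := R) (M := R) i (single j 1) = 0 := by simp [hij]
  have := hK.map_mem (LinearEquiv.transvection hτ).toAddEquiv hx
  simpa [LinearMap.transvection.apply] using K.sub_mem this hx

theorem _root_.IsCharSubgroup.single_apply_mem [Nontrivial ι] (hK : IsCharSubgroup K)
    {x : ι →₀ R} (hx : x ∈ K) (i j : ι) : single j (x i) ∈ K := by
  obtain hij | rfl := ne_or_eq i j
  · exact hK.single_apply_mem_of_ne hx hij
  · obtain ⟨k, hki⟩ := exists_ne i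
    simpa using hK.single_apply_mem_of_ne (hK.single_apply_mem_of_ne hx hki.symm) hki

theorem _root_.IsCharSubgroup.mem_iff_forall_apply_mem [Nontrivial ι] (hK : IsCharSubgroup K)
    (i₀ : ι) (x : ι →₀ R) : x ∈ K ↔ ∀ i, x i ∈ K.comap (singleAddHom i₀) := by
  refine ⟨fun hx i => hK.single_apply_mem hx i i₀, fun hx => ?_⟩
  rw [← x.sum_single]
  exact AddSubmonoidClass.finsuppSum_mem _ _ _ fun i _ => by
    simpa using hK.single_apply_mem (hx i) i₀ i

end Finsupp

/-- The characteristic subgroups of the free abelian group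
`A = ⊕_ℕ ℤ` are exactly the subgroups `r • A`, `r = 0, 1, 2, …`. -/
theorem charSubgroups_of_freeAbelian (K : AddSubgroup (ℕ →₀ ℤ)) :
    IsCharSubgroup K ↔ ∃ r : ℕ, K = AddMonoidHom.range (smulAddHom ℕ (ℕ →₀ ℤ) r) := by
  refine ⟨fun hK => ?_, fun ⟨r, hr⟩ => hr ▸ isCharSubgroup_range_smulAddHom r⟩
  obtain ⟨a, ha⟩ := Int.subgroup_cyclic (K.comap (Finsupp.singleAddHom 0))
  refine ⟨a.natAbs, AddSubgroup.ext fun x => ?_⟩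
  rw [hK.mem_iff_forall_apply_mem 0, Finsupp.mem_range_smulAddHom_iff, ha,
    ← AddSubgroup.zmultiples_eq_closure]
  simp [Int.mem_zmultiples_iff]
end

section
/- For n ≥ 2, the characteristic subgroups of A_n = ⊕_ℕ (ℤ/nℤ) are exactly the trivial subgroup together with the subgroups r·A_n where r is a positive divisor of n. -/
namespace Finsupp

variable {ι M : Type*} [AddCommGroup M]

theorem mem_of_forall_single_mem {H : AddSubgroup (ι →₀ M)} {x : ι →₀ M}
    (h : ∀ i, single i (x i) ∈ H) : x ∈ H := by
  rw [← x.sum_single]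
  exact AddSubmonoidClass.finsuppSum_mem _ _ _ fun i _ => h i

theorem mem_range_nsmul_iff {r : ℕ} {x : ι →₀ M} :
    x ∈ (smulAddHom ℕ (ι →₀ M) r).range ↔ ∀ i, x i ∈ (smulAddHom ℕ M r).range := by
  refine ⟨fun ⟨y, hy⟩ i => ⟨y i, by simp [← hy]⟩, fun h => mem_of_forall_single_mem fun i => ?_⟩
  obtain ⟨y, hy⟩ := h i
  exact ⟨single i y, by simp [← hy]⟩

@[simps apply]
noncomputable def transvection (i k : ι) (hki : k ≠ i) : (ι →₀ M) ≃+ (ι →₀ M) where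
  toFun x := x + single k (x i)
  invFun x := x - single k (x i)
  left_inv x := by simp [single_eq_of_ne hki.symm]
  right_inv x := by simp [single_eq_of_ne hki.symm]
  map_add' x y := by simp only [add_apply, single_add]; abel

end Finsupp

section IsCharSubgroup

variable {G : Type*} [AddCommGroup G] {K : AddSubgroup G}

theorem IsCharSubgroup.apply_mem (hK : IsCharSubgroup K) (φ : G ≃+ G) {x : G} (hx : x ∈ K) :
    φ x ∈ K :=
  hK φ ▸ AddSubgroup.mem_map_of_mem _ hx

theorem isCharSubgroup_bot : IsCharSubgroup (⊥ : AddSubgroup G) :=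
  fun _ => AddSubgroup.map_bot _

theorem isCharSubgroup_range_nsmul (r : ℕ) : IsCharSubgroup (smulAddHom ℕ G r).range :=
  fun φ => φ.map_range_nsmulAddMonoidHom r

end IsCharSubgroup

namespace IsCharSubgroup

open Finsupp

variable {ι M : Type*} [Nontrivial ι] [AddCommGroup M] {K : AddSubgroup (ι →₀ M)}

/-- A transvection into a fresh coordinate `k` splits off `single k (x i)`; a swap of
coordinates then moves it to `j`. -/
theorem single_mem (hK : IsCharSubgroup K) {x : ι →₀ M} (hx : x ∈ K) (i j : ι) :
    single j (x i) ∈ K := by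
  classical
  obtain ⟨k, hki⟩ := exists_ne i
  have hk : single k (x i) ∈ K := by
    simpa using K.sub_mem (hK.apply_mem (transvection i k hki) hx) hx
  simpa [equivMapDomain_single] using hK.apply_mem (Finsupp.domCongr (Equiv.swap k j)) hk

theorem mem_iff_forall_apply_mem_s4 (hK : IsCharSubgroup K) (i₀ : ι) {x : ι →₀ M} :
    x ∈ K ↔ ∀ i, x i ∈ K.comap (singleAddHom i₀) := by
  refine ⟨fun hx i => hK.single_mem hx i i₀, fun h => mem_of_forall_single_mem fun i => ?_⟩
  simpa using hK.single_mem (h i) i₀ i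

end IsCharSubgroup

theorem ZMod.exists_dvd_eq_range_nsmul {n : ℕ} (S : AddSubgroup (ZMod n)) :
    ∃ r : ℕ, r ∣ n ∧ S = (smulAddHom ℕ (ZMod n) r).range := by
  set π := Int.castAddHom (ZMod n)
  have hπ : Function.Surjective π := ZMod.intCast_surjective
  obtain ⟨a, ha⟩ := Int.subgroup_cyclic (S.comap π)
  rw [← AddSubgroup.zmultiples_eq_closure, ← Int.zmultiples_natAbs,
    ← Int.range_nsmulAddMonoidHom] at ha
  refine ⟨a.natAbs, ?_, ?_⟩
  · have hn : (n : ℤ) ∈ S.comap π := by simp [π]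
    rw [ha, Int.range_nsmulAddMonoidHom, Int.mem_zmultiples_iff] at hn
    exact_mod_cast hn
  · have hcomm : π.comp (nsmulAddMonoidHom a.natAbs) = (nsmulAddMonoidHom a.natAbs).comp π := by
      ext; simp [π]
    calc S = (S.comap π).map π := (AddSubgroup.map_comap_eq_self_of_surjective hπ S).symm
      _ = (smulAddHom ℕ (ZMod n) a.natAbs).range := by
        rw [ha, ← AddMonoidHom.range_comp, hcomm, AddMonoidHom.range_comp,
          AddMonoidHom.range_eq_top.mpr hπ, ← AddMonoidHom.range_eq_map]
        rfl

theorem charSubgroups_of_elementary_general (n : ℕ)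
    (K : AddSubgroup (ℕ →₀ ZMod n)) :
    IsCharSubgroup K ↔
      K = ⊥ ∨ ∃ r : ℕ, 0 < r ∧ r ∣ n ∧
        K = AddMonoidHom.range (smulAddHom ℕ (ℕ →₀ ZMod n) r) := by
  constructor
  · intro hK
    obtain ⟨r, hrn, hS⟩ := ZMod.exists_dvd_eq_range_nsmul (K.comap (Finsupp.singleAddHom 0))
    have hK_eq : K = (smulAddHom ℕ (ℕ →₀ ZMod n) r).range := by
      ext x
      rw [hK.mem_iff_forall_apply_mem_s4 0, Finsupp.mem_range_nsmul_iff, hS]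
    rcases r.eq_zero_or_pos with rfl | hr
    · left
      rw [hK_eq, map_zero, AddMonoidHom.range_zero]
    · exact Or.inr ⟨r, hr, hrn, hK_eq⟩
  · rintro (rfl | ⟨r, -, -, rfl⟩)
    · exact isCharSubgroup_bot
    · exact isCharSubgroup_range_nsmul r

/-- For `n ≥ 2`, the characteristic subgroups of
`Aₙ = ⊕_ℕ ℤ/nℤ` are exactly the trivial subgroup together with the subgroups
`r • Aₙ` for positive divisors `r` of `n`. -/
theorem charSubgroups_of_elementary (n : ℕ) (hn : 2 ≤ n)
    (K : AddSubgroup (ℕ →₀ ZMod n)) :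
    IsCharSubgroup K ↔
      K = ⊥ ∨ ∃ r : ℕ, 0 < r ∧ r ∣ n ∧
        K = AddMonoidHom.range (smulAddHom ℕ (ℕ →₀ ZMod n) r) :=
  charSubgroups_of_elementary_general n K
end

section
/- Let G be a countable abelian group and Γ a group of automorphisms of G. The action of Γ on the Pontryagin dual Ĝ (with Haar probability measure) is weakly mixing if and only if the induced action of Γ on G has no finite orbits other than {0}. -/
/-!
The characters `χ_g`, `g ∈ G`, form a Hilbert basis of `L²(Ĝ)`: they are orthonormal because a
nontrivial character has Haar integral zero, and they span a dense subspace by Stone–Weierstrass.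
The Koopman operator of `φ` sends `χ_g` to `χ_{φ g}`, so a finite orbit of `g ≠ 0` spans a
finite-dimensional invariant subspace orthogonal to the constants. Conversely, let `V` be a
finite-dimensional invariant subspace with orthogonal projection `P`, and let `f ∈ V` with
`⟪χ_g, f⟫ = c ≠ 0`. For `φ ∈ Γ` we get `c = ⟪χ_{φ g}, U_φ f⟫ = ⟪P χ_{φ g}, U_φ f⟫`, hence
`‖c‖ ≤ ‖P χ_{φ g}‖ ‖f‖`. By Bessel's inequality `∑ₓ ‖P χₓ‖² ≤ dim V`, so only finitely many `x`
qualify and the orbit of `g` is finite. Thus under the orbit condition `V` consists of constants.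
-/

open MeasureTheory

noncomputable section

variable {G : Type} [AddCommGroup G] [TopologicalSpace G] [DiscreteTopology G]

/-- The Pontryagin dual of `G`: continuous homomorphisms to `ℝ/ℤ`,
with the compact-open topology. -/
abbrev PDual (G : Type) [AddCommGroup G] [TopologicalSpace G] :=
  ContinuousAddMonoidHom G (AddCircle (1 : ℝ))

/-- The dual action of an automorphism `φ` of `G` on the Pontryagin dual:
`χ ↦ χ ∘ φ`. -/
def dualAct (φ : AddAut G) (χ : PDual G) : PDual G :=
  χ.comp ⟨φ.toAddMonoidHom, continuous_of_discreteTopology⟩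

variable [MeasurableSpace (PDual G)]

/-- The constant function `1` as an element of `L²(Ĝ, μ)`. -/
def const1 (μ : Measure (PDual G)) [IsProbabilityMeasure μ] : Lp ℂ 2 μ :=
  (memLp_const (1 : ℂ)).toLp fun _ => (1 : ℂ)

/-- The action of `Γ ≤ Aut(G)` on `(Ĝ, μ)` is *weakly mixing* if the only
finite-dimensional subspaces of `L²(Ĝ, μ)` invariant under the Koopman
operators of the (dual) action of `Γ` are the zero subspace and the constants. -/
def IsWeaklyMixing (μ : Measure (PDual G)) [IsProbabilityMeasure μ]
    (Γ : AddSubgroup (AddAut G))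
    (hmp : ∀ φ : AddAut G, MeasurePreserving (dualAct φ) μ μ) : Prop :=
  ∀ V : Submodule ℂ (Lp ℂ 2 μ), FiniteDimensional ℂ V →
    (∀ φ ∈ Γ, ∀ f ∈ V, Lp.compMeasurePreserving (dualAct φ) (hmp φ) f ∈ V) →
    V = ⊥ ∨ V = Submodule.span ℂ {const1 μ}

open Filter Topology
open scoped InnerProductSpace

section OrthonormalFamily

variable {ι 𝕜 E : Type*} [RCLike 𝕜] [NormedAddCommGroup E] [InnerProductSpace 𝕜 E] {e : ι → E}

theorem Orthonormal.summable_norm_orthogonalProjectionOnto_sq (he : Orthonormal 𝕜 e)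
    (K : Submodule 𝕜 E) [FiniteDimensional 𝕜 K] :
    Summable fun i => ‖K.orthogonalProjectionOnto (e i)‖ ^ 2 := by
  let b := stdOrthonormalBasis 𝕜 K
  have parseval (i : ι) :
      ‖K.orthogonalProjectionOnto (e i)‖ ^ 2 = ∑ j, ‖⟪e i, (b j : E)⟫_𝕜‖ ^ 2 := by
    rw [← b.sum_sq_norm_inner_right]
    simp only [Submodule.inner_orthogonalProjectionOnto_eq_of_mem_left, norm_inner_symm]
  simp only [parseval]
  exact summable_sum fun j _ => he.inner_products_summable (b j : E)

theorem Orthonormal.finite_setOf_le_norm_inner (he : Orthonormal 𝕜 e) (K : Submodule 𝕜 E)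
    [FiniteDimensional 𝕜 K] {ε : ℝ} (hε : 0 < ε) (r : ℝ) :
    {i | ∃ v ∈ K, ‖v‖ ≤ r ∧ ε ≤ ‖⟪e i, v⟫_𝕜‖}.Finite := by
  have hlim : Tendsto (fun i => ‖K.orthogonalProjectionOnto (e i)‖ * r) cofinite (𝓝 0) := by
    have h := (he.summable_norm_orthogonalProjectionOnto_sq K).tendsto_cofinite_zero.sqrt
    simp only [Real.sqrt_sq (norm_nonneg _), Real.sqrt_zero] at h
    simpa using h.mul_const r
  refine (eventually_cofinite.mp (hlim.eventually (gt_mem_nhds hε))).subset ?_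
  rintro i ⟨v, hvK, hvr, hεv⟩
  refine not_lt.mpr ?_
  calc ε ≤ ‖⟪e i, v⟫_𝕜‖ := hεv
    _ = ‖⟪K.orthogonalProjectionOnto (e i), ⟨v, hvK⟩⟫_𝕜‖ := by
      rw [Submodule.inner_orthogonalProjectionOnto_eq_of_mem_right]
    _ ≤ ‖K.orthogonalProjectionOnto (e i)‖ * ‖v‖ := norm_inner_le_norm _ _
    _ ≤ ‖K.orthogonalProjectionOnto (e i)‖ * r := by gcongr

theorem HilbertBasis.mem_span_singleton_iff (b : HilbertBasis ι 𝕜 E) {i : ι} {x : E} :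
    x ∈ Submodule.span 𝕜 {b i} ↔ ∀ j ≠ i, ⟪b j, x⟫_𝕜 = 0 := by
  constructor
  · rintro hx j hji
    obtain ⟨a, rfl⟩ := Submodule.mem_span_singleton.mp hx
    rw [inner_smul_right, b.orthonormal.inner_eq_zero hji, mul_zero]
  · intro hx
    have hsum : HasSum (fun j => b.repr x j • b j) (b.repr x i • b i) :=
      hasSum_single i fun j hji => by rw [b.repr_apply_apply, hx j hji, zero_smul]
    rw [(b.hasSum_repr x).unique hsum]
    exact Submodule.smul_mem _ _ (Submodule.mem_span_singleton_self _)

end OrthonormalFamily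

def AddCircle.ratToReal : AddCircle (1 : ℚ) →+ AddCircle (1 : ℝ) :=
  QuotientAddGroup.map _ _ (Rat.castHom ℝ).toAddMonoidHom <| by
    rintro _ ⟨n, rfl⟩
    exact ⟨n, by simp⟩

theorem AddCircle.ratToReal_injective : Function.Injective AddCircle.ratToReal := by
  refine (injective_iff_map_eq_zero _).mpr fun a ha => ?_
  induction a using QuotientAddGroup.induction_on with
  | H q =>
    obtain ⟨n, hn⟩ := (AddCircle.coe_eq_zero_iff (p := (1 : ℝ))).mp ha
    refine (AddCircle.coe_eq_zero_iff (p := (1 : ℚ))).mpr ⟨n, ?_⟩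
    simp only [zsmul_eq_mul, mul_one] at hn ⊢
    exact_mod_cast (show (n : ℝ) = q by simpa using hn)

section Characters

variable {A : Type} [AddCommGroup A] [TopologicalSpace A]

/-- The character `χ_g(x) = exp (2πi x(g))` of the dual group. -/
def character (g : A) : C(PDual A, ℂ) :=
  ⟨fun x => (x g).toCircle, by fun_prop⟩

@[simp]
theorem character_apply (g : A) (x : PDual A) : character g x = (x g).toCircle := rfl

@[simp]
theorem character_zero : character (0 : A) = 1 := by
  ext x
  simp

theorem character_add (g h : A) : character (g + h) = character g * character h := by
  ext x
  simp [AddCircle.toCircle_add]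

theorem character_apply_add (g : A) (x y : PDual A) :
    character g (x + y) = character g x * character g y := by
  simp [AddCircle.toCircle_add]

theorem star_character (g : A) : star (character g) = character (-g) := by
  ext x
  simp [AddCircle.toCircle_neg, ← Circle.coe_inv_eq_conj]

def characterSubalgebra : StarSubalgebra ℂ C(PDual A, ℂ) where
  toSubalgebra := Algebra.adjoin ℂ (Set.range character)
  star_mem' := by
    change Algebra.adjoin ℂ (Set.range character) ≤ star (Algebra.adjoin ℂ (Set.range character))
    refine Algebra.adjoin_le ?_
    rintro - ⟨g, rfl⟩
    exact Algebra.subset_adjoin ⟨-g, (star_character g).symm⟩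

theorem characterSubalgebra_toSubmodule :
    Subalgebra.toSubmodule (characterSubalgebra (A := A)).toSubalgebra =
      Submodule.span ℂ (Set.range character) := by
  refine Algebra.adjoin_eq_span_of_subset _ (Set.Subset.trans ?_ Submodule.subset_span)
  intro f hf
  induction hf using Submonoid.closure_induction with
  | mem f hf => exact hf
  | one => exact ⟨0, character_zero⟩
  | mul _ _ _ _ hf hg =>
    obtain ⟨⟨g, rfl⟩, ⟨h, rfl⟩⟩ := And.intro hf hg
    exact ⟨g + h, character_add g h⟩

theorem characterSubalgebra_separatesPoints : (characterSubalgebra (A := A)).SeparatesPoints := by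
  intro x y hxy
  obtain ⟨g, hg⟩ : ∃ g, x g ≠ y g := by
    by_contra! h
    exact hxy (DFunLike.ext x y h)
  refine ⟨_, ⟨character g, Algebra.subset_adjoin ⟨g, rfl⟩, rfl⟩, ?_⟩
  simpa [Circle.coe_inj] using (AddCircle.injective_toCircle one_ne_zero).ne hg

variable [DiscreteTopology A]

instance [Countable A] : TopologicalSpace.PseudoMetrizableSpace (PDual A) :=
  ContinuousAddMonoidHom.isClosedEmbedding_coe.isInducing.pseudoMetrizableSpace

theorem exists_character_apply_ne_one {g : A} (hg : g ≠ 0) : ∃ x, character g x ≠ 1 := by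
  obtain ⟨c, hc⟩ := CharacterModule.exists_character_apply_ne_zero_of_ne_zero hg
  let x : PDual A := ⟨AddCircle.ratToReal.comp c, continuous_of_discreteTopology⟩
  have hx : x g ≠ 0 := (map_ne_zero_iff _ AddCircle.ratToReal_injective).mpr hc
  exact ⟨x, fun h => hx (AddCircle.injective_toCircle one_ne_zero
    ((Circle.coe_eq_one.mp h).trans AddCircle.toCircle_zero.symm))⟩

theorem span_character_closure_eq_top :
    (Submodule.span ℂ (Set.range (character (A := A)))).topologicalClosure = ⊤ := by
  rw [← characterSubalgebra_toSubmodule]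
  exact congr_arg (Subalgebra.toSubmodule <| StarSubalgebra.toSubalgebra ·)
    (ContinuousMap.starSubalgebra_topologicalClosure_eq_top_of_separatesPoints _
      characterSubalgebra_separatesPoints)

end Characters

section CharacterBasis

open scoped ComplexConjugate

variable [BorelSpace (PDual G)] (μ : Measure (PDual G))

theorem integral_character_of_ne_zero [μ.IsAddLeftInvariant] {g : G} (hg : g ≠ 0) :
    ∫ x, character g x ∂μ = 0 := by
  obtain ⟨x₀, hx₀⟩ := exists_character_apply_ne_one hg
  have hinv : ∫ x, character g (x₀ + x) ∂μ = ∫ x, character g x ∂μ :=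
    integral_add_left_eq_self _ x₀
  simp only [character_apply_add, integral_const_mul, mul_left_eq_self₀] at hinv
  exact hinv.resolve_left hx₀

def characterLp [IsFiniteMeasure μ] (g : G) : Lp ℂ 2 μ :=
  ContinuousMap.toLp 2 μ ℂ (character g)

theorem orthonormal_characterLp [μ.IsAddLeftInvariant] [IsProbabilityMeasure μ] :
    Orthonormal ℂ (characterLp μ) := by
  classical
  rw [orthonormal_iff_ite]
  intro g h
  have hprod (x : PDual G) : character h x * conj (character g x) = character (h - g) x := by
    rw [sub_eq_add_neg, character_add, ← star_character]
    rfl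
  simp only [characterLp, ContinuousMap.inner_toLp, hprod]
  split_ifs with hgh
  · simp [hgh]
  · exact integral_character_of_ne_zero μ (sub_ne_zero.mpr (Ne.symm hgh))

theorem span_characterLp_closure_eq_top [Countable G] [IsFiniteMeasure μ] :
    (Submodule.span ℂ (Set.range (characterLp μ))).topologicalClosure = ⊤ := by
  convert! (ContinuousMap.toLp_denseRange ℂ μ ℂ ENNReal.ofNat_ne_top
    ).topologicalClosure_map_submodule span_character_closure_eq_top
  rw [Submodule.map_span, ← Set.range_comp]
  rfl

def characterHilbertBasis [Countable G] [μ.IsAddLeftInvariant] [IsProbabilityMeasure μ] :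
    HilbertBasis G ℂ (Lp ℂ 2 μ) :=
  HilbertBasis.mk (orthonormal_characterLp μ) (span_characterLp_closure_eq_top μ).ge

theorem coe_characterHilbertBasis [Countable G] [μ.IsAddLeftInvariant] [IsProbabilityMeasure μ] :
    ⇑(characterHilbertBasis μ) = characterLp μ :=
  HilbertBasis.coe_mk _ _

theorem characterLp_zero [IsProbabilityMeasure μ] : characterLp μ (0 : G) = const1 μ := by
  refine Lp.ext ?_
  filter_upwards [ContinuousMap.coeFn_toLp (p := 2) (𝕜 := ℂ) μ (character (0 : G)),
    MemLp.coeFn_toLp (memLp_const (1 : ℂ) (μ := μ))] with x h1 h2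
  rw [characterLp, h1, const1, h2, character_zero]
  rfl

theorem compMeasurePreserving_characterLp [IsFiniteMeasure μ] {φ : AddAut G}
    (hφ : MeasurePreserving (dualAct φ) μ μ) (g : G) :
    Lp.compMeasurePreserving (dualAct φ) hφ (characterLp μ g) = characterLp μ (φ g) := by
  refine Lp.ext ?_
  have hg := ContinuousMap.coeFn_toLp (p := 2) (𝕜 := ℂ) μ (character g)
  refine (Lp.coeFn_compMeasurePreserving _ hφ).trans ?_
  refine (hφ.quasiMeasurePreserving.ae_eq_comp hg).trans ?_
  exact (ContinuousMap.coeFn_toLp (p := 2) (𝕜 := ℂ) μ (character (φ g))).symm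

theorem inner_characterLp_compMeasurePreserving [IsFiniteMeasure μ] {φ : AddAut G}
    (hφ : MeasurePreserving (dualAct φ) μ μ) (g : G) (f : Lp ℂ 2 μ) :
    ⟪characterLp μ (φ g), Lp.compMeasurePreserving (dualAct φ) hφ f⟫_ℂ =
      ⟪characterLp μ g, f⟫_ℂ := by
  rw [← compMeasurePreserving_characterLp μ hφ]
  exact (Lp.compMeasurePreservingₗᵢ (E := ℂ) (p := 2) ℂ (dualAct φ) hφ).inner_map_map _ _

theorem compMeasurePreserving_mem_span_characterLp_image [IsFiniteMeasure μ] {φ : AddAut G}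
    (hφ : MeasurePreserving (dualAct φ) μ μ) {S : Set G} (hS : Set.MapsTo φ S S) {f : Lp ℂ 2 μ}
    (hf : f ∈ Submodule.span ℂ (characterLp μ '' S)) :
    Lp.compMeasurePreserving (dualAct φ) hφ f ∈ Submodule.span ℂ (characterLp μ '' S) := by
  refine Submodule.span_le (p := (Submodule.span ℂ (characterLp μ '' S)).comap
    (Lp.compMeasurePreservingₗ ℂ (dualAct φ) hφ)).mpr ?_ hf
  rintro _ ⟨x, hx, rfl⟩
  exact Submodule.subset_span ⟨φ x, hS hx, (compMeasurePreserving_characterLp μ hφ x).symm⟩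

end CharacterBasis

theorem inner_characterLp_eq_zero_of_mem_invariant [BorelSpace (PDual G)] {μ : Measure (PDual G)}
    [μ.IsAddLeftInvariant] [IsProbabilityMeasure μ] {Γ : AddSubgroup (AddAut G)}
    {hmp : ∀ φ : AddAut G, MeasurePreserving (dualAct φ) μ μ}
    {V : Submodule ℂ (Lp ℂ 2 μ)} [FiniteDimensional ℂ V]
    (hV : ∀ φ ∈ Γ, ∀ f ∈ V, Lp.compMeasurePreserving (dualAct φ) (hmp φ) f ∈ V)
    {g : G} (horb : {x : G | ∃ φ ∈ Γ, φ g = x}.Infinite) {f : Lp ℂ 2 μ} (hf : f ∈ V) :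
    ⟪characterLp μ g, f⟫_ℂ = 0 := by
  by_contra hc
  refine horb (((orthonormal_characterLp μ).finite_setOf_le_norm_inner V
    (norm_pos_iff.mpr hc) ‖f‖).subset ?_)
  rintro _ ⟨φ, hφ, rfl⟩
  exact ⟨_, hV φ hφ f hf, (Lp.norm_compMeasurePreserving f (hmp φ)).le,
    by rw [inner_characterLp_compMeasurePreserving]⟩

/-- For a countable (discrete) abelian group `G` and a group
`Γ` of automorphisms of `G`, the action of `Γ` on the Pontryagin dual `Ĝ` with
Haar probability measure is weakly mixing iff the action of `Γ` on `G` has no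
finite orbits other than `{0}`. -/
theorem weaklyMixing_iff_no_finite_orbits [Countable G] [BorelSpace (PDual G)]
    (Γ : AddSubgroup (AddAut G)) (μ : Measure (PDual G))
    [μ.IsAddHaarMeasure] [IsProbabilityMeasure μ]
    (hmp : ∀ φ : AddAut G, MeasurePreserving (dualAct φ) μ μ) :
    IsWeaklyMixing μ Γ hmp ↔
      ∀ g : G, g ≠ 0 → {x : G | ∃ φ ∈ Γ, φ g = x}.Infinite := by
  have mem_constants (f : Lp ℂ 2 μ) :
      f ∈ Submodule.span ℂ {const1 μ} ↔ ∀ g ≠ 0, ⟪characterLp μ g, f⟫_ℂ = 0 := by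
    rw [← characterLp_zero, ← coe_characterHilbertBasis, HilbertBasis.mem_span_singleton_iff]
  constructor
  · intro hwm g hg hfin
    let V := Submodule.span ℂ (characterLp μ '' {x : G | ∃ φ ∈ Γ, φ g = x})
    have hVfin : FiniteDimensional ℂ V := FiniteDimensional.span_of_finite ℂ (hfin.image _)
    have hVinv (φ) (hφ : φ ∈ Γ) (f) (hf : f ∈ V) :
        Lp.compMeasurePreserving (dualAct φ) (hmp φ) f ∈ V := by
      refine compMeasurePreserving_mem_span_characterLp_image μ (hmp φ) ?_ hf
      rintro _ ⟨ψ, hψ, rfl⟩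
      exact ⟨φ + ψ, add_mem hφ hψ, rfl⟩
    have hV : V ≤ Submodule.span ℂ {const1 μ} := (hwm V hVfin hVinv).elim (· ▸ bot_le) le_of_eq
    have hg_mem : characterLp μ g ∈ V := Submodule.subset_span ⟨g, ⟨0, zero_mem Γ, rfl⟩, rfl⟩
    have hgg := (mem_constants _).mp (hV hg_mem) g hg
    exact (orthonormal_characterLp μ).ne_zero g (inner_self_eq_zero.mp hgg)
  · intro horb V hVfin hVinv
    have hV : V ≤ Submodule.span ℂ {const1 μ} := fun f hf => (mem_constants f).mpr fun g hg =>
      inner_characterLp_eq_zero_of_mem_invariant hVinv (horb g hg) hf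
    have hconst : const1 μ ≠ 0 := characterLp_zero μ ▸ (orthonormal_characterLp μ).ne_zero 0
    exact (nonzero_span_atom _ hconst).le_iff.mp hV
end
end
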